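/- Let u≥3 be odd. For all λ,λ′∈P⁺ᵘ, define C₁ = −e^{−πiu/3}·𝒮2[λ;λ′,1]·T(λ̄′)/T(λ̄′−(u/2)(1,0)) and C₂ = e^{−πiu/3}·𝒮2[λ;λ′,2]·T(w₀·λ̄′)/T(∇(λ′)‾−(u/2)(0,1)), where w₀·λ̄′=(u/2−λ₂′−2, u/2−λ₁′−2). Then C₁ = C₂ = (i/(2√3·u))·e^{2πi⟨λ̄+λ̄′,ω₁⟩}·e^{−2πiu/3}·Σ_{w∈S₃}det(w)·e^{−4πi⟨w(λ̄+ρ),λ̄′+ρ⟩/u}, and consequently C₁+C₂ = S^{BP}_{λ,λ′}. (This is the key computation identifying the Bershadsky–Polyakov S-matrix from the Kac–Wakimoto data in the proof of the paper's modularity theorem for the Bershadsky–Polyakov minimal models.) -/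
import Mathlib


noncomputable section

open Complex

/-- The six elements of the Weyl group `S₃` of sl₃ acting on weights in
Dynkin-label coordinates: `id, w₁, w₂, w₁w₂, w₂w₁, w₃`. -/
def wmap (w : Fin 6) (x : ℂ × ℂ) : ℂ × ℂ :=
  ![x, (-x.1, x.1 + x.2), (x.1 + x.2, -x.2), (-x.1 - x.2, x.1),
    (x.2, -x.1 - x.2), (-x.2, -x.1)] w

/-- The signs of the six Weyl group elements. -/
def wdet : Fin 6 → ℤ := ![1, -1, -1, 1, 1, -1]

/-- The normalised invariant bilinear form of sl₃ in Dynkin-label coordinates. -/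
def bform (x y : ℂ × ℂ) : ℂ :=
  (2 * x.1 * y.1 + x.1 * y.2 + x.2 * y.1 + 2 * x.2 * y.2) / 3

/-- The Weyl vector `ρ = (1,1)`. -/
def rho : ℂ × ℂ := (1, 1)

/-- The finite part `λ̄ = (λ₁,λ₂)` of a triple `λ = (λ₀,λ₁,λ₂)`. -/
def bar (l : ℕ × ℕ × ℕ) : ℂ × ℂ := ((l.2.1 : ℂ), (l.2.2 : ℂ))

/-- The finite part `∇(λ)‾ = (λ₂,λ₀)` of `∇(λ) = (λ₁,λ₂,λ₀)`. -/
def nbar (l : ℕ × ℕ × ℕ) : ℂ × ℂ := ((l.2.2 : ℂ), (l.1 : ℂ))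

/-- `j_λ = -(λ₁-λ₂)/3`. -/
def jBP (l : ℕ × ℕ × ℕ) : ℂ := -(((l.2.1 : ℂ) - (l.2.2 : ℂ)) / 3)

/-- `Σ_{w∈S₃} det(w)·e^{-4πi⟨w(x+ρ),y+ρ⟩/u}`. -/
def Ssum (u : ℕ) (x y : ℂ × ℂ) : ℂ :=
  ∑ w : Fin 6, (wdet w : ℂ) *
    exp (-4 * Real.pi * I * bform (wmap w (x + rho)) (y + rho) / u)

/-- The Bershadsky–Polyakov minimal-model S-matrix. -/
def SBP (u : ℕ) (l l' : ℕ × ℕ × ℕ) : ℂ :=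
  (I / (Real.sqrt 3 * u)) * exp (2 * Real.pi * I * (jBP l + jBP l' - (u : ℂ) / 3)) *
    Ssum u (bar l) (bar l')

/-- The Kac–Wakimoto T-matrix at `v = 2`. -/
def Tmat2 (u : ℕ) (x : ℂ × ℂ) : ℂ :=
  exp (-2 * Real.pi * I / 3) * exp (2 * Real.pi * I * bform (x + rho) (x + rho) / u)

/-- The Kac–Wakimoto S-matrix entry `𝒮2[λ;λ′,1]` for the admissible weights
`λ-(u/2)ω₀` and `λ′-(u/2)ω₁`. -/
def S2a (u : ℕ) (l l' : ℕ × ℕ × ℕ) : ℂ :=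
  (-I / (2 * Real.sqrt 3 * u)) *
    exp (2 * Real.pi * I * bform (bar l + rho) ((1 : ℂ), (0 : ℂ))) * Ssum u (bar l) (bar l')

/-- The Kac–Wakimoto S-matrix entry `𝒮2[λ;λ′,2]` for the admissible weights
`λ-(u/2)ω₀` and `∇(λ′)-(u/2)ω₂`. -/
def S2b (u : ℕ) (l l' : ℕ × ℕ × ℕ) : ℂ :=
  (-I / (2 * Real.sqrt 3 * u)) *
    exp (2 * Real.pi * I * bform (bar l + rho) ((0 : ℂ), (1 : ℂ))) * Ssum u (bar l) (nbar l')

/-- `C₁ = -e^{-πiu/3}·𝒮2[λ;λ′,1]·T(λ̄′)/T(λ̄′-(u/2)(1,0))`. -/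
def C1 (u : ℕ) (l l' : ℕ × ℕ × ℕ) : ℂ :=
  -exp (-(Real.pi) * I * u / 3) * S2a u l l' * Tmat2 u (bar l')
    / Tmat2 u (bar l' - ((u : ℂ) / 2, (0 : ℂ)))

/-- `C₂ = e^{-πiu/3}·𝒮2[λ;λ′,2]·T(w₀·λ̄′)/T(∇(λ′)‾-(u/2)(0,1))`, with
`w₀·λ̄′ = (u/2-λ₂′-2, u/2-λ₁′-2)`. -/
def C2 (u : ℕ) (l l' : ℕ × ℕ × ℕ) : ℂ :=
  exp (-(Real.pi) * I * u / 3) * S2b u l l' *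
    Tmat2 u ((u : ℂ) / 2 - (l'.2.2 : ℂ) - 2, (u : ℂ) / 2 - (l'.2.1 : ℂ) - 2)
    / Tmat2 u (nbar l' - ((0 : ℂ), (u : ℂ) / 2))


private lemma wkey (A B : ℂ) (n : ℤ) (h : A = B + n * (2 * Real.pi * I)) :
    Complex.exp A = Complex.exp B := by
  rw [h, Complex.exp_add, Complex.exp_int_mul_two_pi_mul_I, mul_one]

private lemma wkeyneg (A B : ℂ) (n : ℤ)
    (h : A = B + n * (2 * Real.pi * I) + Real.pi * I) :
    Complex.exp A = -Complex.exp B := by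
  rw [h, Complex.exp_add, Complex.exp_add, Complex.exp_int_mul_two_pi_mul_I,
    Complex.exp_pi_mul_I]; ring

private lemma Tdiv (u : ℕ) (x y : ℂ × ℂ) : Tmat2 u x / Tmat2 u y =
    exp (2 * Real.pi * I * bform (x + rho) (x + rho) / u
      - 2 * Real.pi * I * bform (y + rho) (y + rho) / u) := by
  unfold Tmat2
  rw [mul_div_mul_left _ _ (Complex.exp_ne_zero _), ← Complex.exp_sub]

private lemma wmap0 (x : ℂ × ℂ) : wmap 0 x = x := rfl
private lemma wmap1 (x : ℂ × ℂ) : wmap 1 x = (-x.1, x.1 + x.2) := rfl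
private lemma wmap2 (x : ℂ × ℂ) : wmap 2 x = (x.1 + x.2, -x.2) := rfl
private lemma wmap3 (x : ℂ × ℂ) : wmap 3 x = (-x.1 - x.2, x.1) := rfl
private lemma wmap4 (x : ℂ × ℂ) : wmap 4 x = (x.2, -x.1 - x.2) := rfl
private lemma wmap5 (x : ℂ × ℂ) : wmap 5 x = (-x.2, -x.1) := rfl

private lemma wdet0 : wdet 0 = 1 := rfl
private lemma wdet1 : wdet 1 = -1 := rfl
private lemma wdet2 : wdet 2 = -1 := rfl
private lemma wdet3 : wdet 3 = 1 := rfl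
private lemma wdet4 : wdet 4 = 1 := rfl
private lemma wdet5 : wdet 5 = -1 := rfl

set_option maxHeartbeats 2000000 in
private lemma ssum_nbar (u : ℕ) (hu : 3 ≤ u) (l l' : ℕ × ℕ × ℕ)
    (hl' : l'.1 + l'.2.1 + l'.2.2 = u - 3) :
    Ssum u (bar l) (nbar l') =
      exp (-4 * Real.pi * I * ((l.2.1 : ℂ) + 2 * l.2.2 + 3) / 3) *
        Ssum u (bar l) (bar l') := by
  have hu0 : (u : ℂ) ≠ 0 := Nat.cast_ne_zero.mpr (by omega)
  have hc : (l'.1 : ℂ) = (u : ℂ) - 3 - l'.2.1 - l'.2.2 := by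
    have h3 : l'.1 + l'.2.1 + l'.2.2 + 3 = u := by omega
    have := congrArg (Nat.cast (R := ℂ)) h3
    push_cast at this
    linear_combination this
  have e : ∀ (k j : Fin 6) (n : ℤ),
      (-4 * (Real.pi : ℂ) * I * bform (wmap k (bar l + rho)) (nbar l' + rho) / u
        = -4 * Real.pi * I * ((l.2.1 : ℂ) + 2 * l.2.2 + 3) / 3
          + -4 * Real.pi * I * bform (wmap j (bar l + rho)) (bar l' + rho) / u
          + n * (2 * Real.pi * I)) →
      exp (-4 * Real.pi * I * bform (wmap k (bar l + rho)) (nbar l' + rho) / u)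
        = exp (-4 * Real.pi * I * ((l.2.1 : ℂ) + 2 * l.2.2 + 3) / 3) *
          exp (-4 * Real.pi * I * bform (wmap j (bar l + rho)) (bar l' + rho) / u) := by
    intro k j n h
    rw [← Complex.exp_add]
    exact wkey _ _ n (by linear_combination h)
  have e0 := e 0 3 0 (by
    simp only [wmap0, wmap3, bform, bar, nbar, rho, Prod.mk_add_mk, hc]
    push_cast; field_simp; ring)
  have e1 := e 1 5 0 (by
    simp only [wmap1, wmap5, bform, bar, nbar, rho, Prod.mk_add_mk, hc]
    push_cast; field_simp; ring)
  have e2 := e 2 1 (2 * l.2.2 + 2) (by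
    simp only [wmap2, wmap1, bform, bar, nbar, rho, Prod.mk_add_mk, hc]
    push_cast; field_simp; ring)
  have e3 := e 3 4 (2 * l.2.2 + 2) (by
    simp only [wmap3, wmap4, bform, bar, nbar, rho, Prod.mk_add_mk, hc]
    push_cast; field_simp; ring)
  have e4 := e 4 0 (2 * l.2.1 + 2 * l.2.2 + 4) (by
    simp only [wmap4, wmap0, bform, bar, nbar, rho, Prod.mk_add_mk, hc]
    push_cast; field_simp; ring)
  have e5 := e 5 2 (2 * l.2.1 + 2 * l.2.2 + 4) (by
    simp only [wmap5, wmap2, bform, bar, nbar, rho, Prod.mk_add_mk, hc]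
    push_cast; field_simp; ring)
  unfold Ssum
  rw [Finset.mul_sum, Fin.sum_univ_six, Fin.sum_univ_six,
    e0, e1, e2, e3, e4, e5, wdet0, wdet1, wdet2, wdet3, wdet4, wdet5]
  push_cast
  ring

set_option maxHeartbeats 2000000 in
/-- The key computation identifying the Bershadsky–Polyakov S-matrix from the
Kac–Wakimoto modular data:
`C₁ = C₂ = (i/(2√3u))·e^{2πi⟨λ̄+λ̄′,ω₁⟩}·e^{-2πiu/3}·Σ_{w∈S₃}det(w)·e^{-4πi⟨w(λ̄+ρ),λ̄′+ρ⟩/u}`,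
hence `C₁+C₂ = S^{BP}_{λ,λ′}`. -/
theorem stmt5 (u : ℕ) (hu : 3 ≤ u) (hodd : Odd u)
    (l l' : ℕ × ℕ × ℕ)
    (hl : l.1 + l.2.1 + l.2.2 = u - 3) (hl' : l'.1 + l'.2.1 + l'.2.2 = u - 3) :
    C1 u l l'
      = (I / (2 * Real.sqrt 3 * u)) *
          exp (2 * Real.pi * I * bform (bar l + bar l') ((1 : ℂ), (0 : ℂ))) *
          exp (-2 * Real.pi * I * u / 3) * Ssum u (bar l) (bar l') ∧
    C2 u l l'
      = (I / (2 * Real.sqrt 3 * u)) *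
          exp (2 * Real.pi * I * bform (bar l + bar l') ((1 : ℂ), (0 : ℂ))) *
          exp (-2 * Real.pi * I * u / 3) * Ssum u (bar l) (bar l') ∧
    C1 u l l' + C2 u l l' = SBP u l l' := by
  have hu0 : (u : ℂ) ≠ 0 := Nat.cast_ne_zero.mpr (by omega)
  obtain ⟨m, hm⟩ := hodd
  have hmc : (u : ℂ) = 2 * m + 1 := by
    have := congrArg (Nat.cast (R := ℂ)) hm
    push_cast at this; linear_combination this
  have h2m : (2 * (m : ℂ) + 1) ≠ 0 := hmc ▸ hu0
  have hc : (l'.1 : ℂ) = (u : ℂ) - 3 - l'.2.1 - l'.2.2 := by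
    have h3 : l'.1 + l'.2.1 + l'.2.2 + 3 = u := by omega
    have := congrArg (Nat.cast (R := ℂ)) h3
    push_cast at this; linear_combination this
  have key1 : exp (-(Real.pi) * I * u / 3) *
      exp (2 * Real.pi * I * bform (bar l + rho) ((1 : ℂ), (0 : ℂ))) *
      exp (2 * Real.pi * I * bform (bar l' + rho) (bar l' + rho) / u
        - 2 * Real.pi * I * bform (bar l' - ((u : ℂ) / 2, (0 : ℂ)) + rho)
            (bar l' - ((u : ℂ) / 2, (0 : ℂ)) + rho) / u)
      = exp (2 * Real.pi * I * bform (bar l + bar l') ((1 : ℂ), (0 : ℂ))) *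
          exp (-2 * Real.pi * I * u / 3) := by
    rw [← Complex.exp_add, ← Complex.exp_add, ← Complex.exp_add]
    apply wkey _ _ 2
    simp only [bform, bar, rho, Prod.mk_add_mk, Prod.mk_sub_mk]
    push_cast; field_simp; ring
  have h1 : C1 u l l'
      = (I / (2 * Real.sqrt 3 * u)) *
          exp (2 * Real.pi * I * bform (bar l + bar l') ((1 : ℂ), (0 : ℂ))) *
          exp (-2 * Real.pi * I * u / 3) * Ssum u (bar l) (bar l') := by
    unfold C1 S2a
    rw [mul_div_assoc, Tdiv]
    linear_combination (I / (2 * (Real.sqrt 3 : ℂ) * u) * Ssum u (bar l) (bar l')) * key1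
  have key2 : exp (-(Real.pi) * I * u / 3) *
      exp (2 * Real.pi * I * bform (bar l + rho) ((0 : ℂ), (1 : ℂ))) *
      exp (-4 * Real.pi * I * ((l.2.1 : ℂ) + 2 * l.2.2 + 3) / 3) *
      exp (2 * Real.pi * I *
            bform (((u : ℂ) / 2 - (l'.2.2 : ℂ) - 2, (u : ℂ) / 2 - (l'.2.1 : ℂ) - 2) + rho)
              (((u : ℂ) / 2 - (l'.2.2 : ℂ) - 2, (u : ℂ) / 2 - (l'.2.1 : ℂ) - 2) + rho) / u
        - 2 * Real.pi * I * bform (nbar l' - ((0 : ℂ), (u : ℂ) / 2) + rho)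
            (nbar l' - ((0 : ℂ), (u : ℂ) / 2) + rho) / u)
      = -(exp (2 * Real.pi * I * bform (bar l + bar l') ((1 : ℂ), (0 : ℂ))) *
          exp (-2 * Real.pi * I * u / 3)) := by
    rw [← Complex.exp_add, ← Complex.exp_add, ← Complex.exp_add, ← Complex.exp_add]
    apply wkeyneg _ _ ((m : ℤ) - (l.2.1 + l.2.2 + l'.2.1 + l'.2.2 + 2))
    simp only [bform, bar, nbar, rho, Prod.mk_add_mk, Prod.mk_sub_mk, hc]
    rw [hmc]
    push_cast; field_simp; ring
  have h2 : C2 u l l'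
      = (I / (2 * Real.sqrt 3 * u)) *
          exp (2 * Real.pi * I * bform (bar l + bar l') ((1 : ℂ), (0 : ℂ))) *
          exp (-2 * Real.pi * I * u / 3) * Ssum u (bar l) (bar l') := by
    unfold C2 S2b
    rw [mul_div_assoc, Tdiv, ssum_nbar u hu l l' hl']
    linear_combination ((-I) / (2 * (Real.sqrt 3 : ℂ) * u) * Ssum u (bar l) (bar l')) * key2
  refine ⟨h1, h2, ?_⟩
  rw [h1, h2]
  have key3 : exp (2 * Real.pi * I * bform (bar l + bar l') ((1 : ℂ), (0 : ℂ))) *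
      exp (-2 * Real.pi * I * u / 3)
      = exp (2 * Real.pi * I * (jBP l + jBP l' - (u : ℂ) / 3)) := by
    rw [← Complex.exp_add]
    apply wkey _ _ ((l.2.1 : ℤ) + l'.2.1)
    simp only [bform, bar, jBP, Prod.mk_add_mk]
    push_cast; field_simp; ring
  unfold SBP
  linear_combination (I / ((Real.sqrt 3 : ℂ) * u) * Ssum u (bar l) (bar l')) * key3

end
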